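/- The operators Δ̂_G and Δ̂_Ḡ are mutually adjoint on Schwartz functions: for all Schwartz functions φ, ψ on E, ⟨Δ̂_Ḡ φ, ψ⟩ = ⟨φ, Δ̂_G ψ⟩, where ⟨φ,ψ⟩ = ∫_E φ(θ) conj(ψ(θ)) dvol(θ). Consequently, for t = k + is with s ∈ ℝ, ⟨φ, (1/(2t)) Δ̂_G ψ⟩ = ⟨(1/(2t̄)) Δ̂_Ḡ φ, ψ⟩. -/

import Mathlib

/-!
Integration by parts turns `D_{c,v}` into `-D_{-c,v}` under `∫ f · g`, so moving both first-order
factors of `Σ A_{pq} D_{c,p} D_{c,q}` across the pairing gives `Σ A_{pq} D_{-c,q} D_{-c,p}`, which is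
the same operator when `A` is symmetric (here `A = C⁻¹`). Complex conjugation sends `D_{c,v}` to
`D_{-c̄,v}`, so `conj (Δ̂_G ψ)` is, up to the conjugated prefactor, that operator with
`c = -σ⁻¹` applied to `ψ̄`; moving it onto `φ` produces exactly `Δ̂_Ḡ φ`.
-/

open MeasureTheory Complex
open scoped Real RealInnerProductSpace BigOperators

noncomputable section

/-- `ℝⁿ` as a Euclidean space. -/
abbrev EN (n : ℕ) := EuclideanSpace ℝ (Fin n)

/-- The first order operator `D f(θ) = df_θ[v] + 2πi c ⟨v,θ⟩ f(θ)`; with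
`c = σ̄⁻¹` (resp. `c = σ⁻¹`) and `v = b_j` it is `D_{σ,j}` (resp. `D_{σ̄,j}`). -/
def Dop {n : ℕ} (c : ℂ) (v : EN n) (f : EN n → ℂ) : EN n → ℂ :=
  fun θ => fderiv ℝ f θ v + 2 * (π : ℂ) * I * c * (⟪v, θ⟫ : ℂ) * f θ

/-- The Gram matrix `C_{pq} = ⟨b_p, b_q⟩` of the basis `b`. -/
def Cmat {n : ℕ} (b : Fin n → EN n) : Matrix (Fin n) (Fin n) ℝ :=
  Matrix.of fun p q => ⟪b p, b q⟫

/-- `Δ̂_G = (ik/π)(σ̄/(σ̄−σ))² Σ_{p,q} C^{pq} D_{σ,p} D_{σ,q}`. -/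
def DeltaG {n : ℕ} (k : ℕ) (σ : ℂ) (b : Fin n → EN n) (f : EN n → ℂ) : EN n → ℂ :=
  fun θ => I * (k : ℂ) / (π : ℂ) * (starRingEnd ℂ σ / (starRingEnd ℂ σ - σ)) ^ 2 *
    ∑ p, ∑ q, ((Cmat b)⁻¹ p q : ℂ) *
      Dop (starRingEnd ℂ σ)⁻¹ (b p) (Dop (starRingEnd ℂ σ)⁻¹ (b q) f) θ

/-- `Δ̂_Ḡ = −(ik/π)(σ/(σ−σ̄))² Σ_{p,q} C^{pq} D_{σ̄,p} D_{σ̄,q}`. -/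
def DeltaGbar {n : ℕ} (k : ℕ) (σ : ℂ) (b : Fin n → EN n) (f : EN n → ℂ) : EN n → ℂ :=
  fun θ => -(I * (k : ℂ) / (π : ℂ)) * (σ / (σ - starRingEnd ℂ σ)) ^ 2 *
    ∑ p, ∑ q, ((Cmat b)⁻¹ p q : ℂ) *
      Dop σ⁻¹ (b p) (Dop σ⁻¹ (b q) f) θ

open SchwartzMap LineDeriv

variable {n : ℕ}

lemma conj_Dop (c : ℂ) (v : EN n) (f : EN n → ℂ) (θ : EN n) :
    starRingEnd ℂ (Dop c v f θ) = Dop (-starRingEnd ℂ c) v (fun x => starRingEnd ℂ (f x)) θ := by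
  have hderiv : fderiv ℝ (fun x => starRingEnd ℂ (f x)) θ v = starRingEnd ℂ (fderiv ℝ f θ v) := by
    change fderiv ℝ (conjLIE ∘ f) θ v = _
    rw [LinearIsometryEquiv.comp_fderiv]
    rfl
  simp only [Dop, hderiv, map_add, map_mul, conj_I, conj_ofReal, map_ofNat]
  ring

def schwartzDop (c : ℂ) (v : EN n) (f : 𝓢(EN n, ℂ)) : 𝓢(EN n, ℂ) :=
  ∂_{v} f + smulLeftCLM ℂ (fun θ : EN n => 2 * (π : ℂ) * I * c * (⟪v, θ⟫ : ℂ)) f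

lemma coe_schwartzDop (c : ℂ) (v : EN n) (f : 𝓢(EN n, ℂ)) :
    ⇑(schwartzDop c v f) = Dop c v f := by
  ext θ
  rw [schwartzDop, add_apply, smulLeftCLM_apply_apply (by fun_prop), lineDerivOp_apply_eq_fderiv,
    Dop, smul_eq_mul]

lemma integrable_mul {D : Type*} [NormedAddCommGroup D] [NormedSpace ℝ D] [MeasurableSpace D]
    [BorelSpace D] [FiniteDimensional ℝ D] {μ : Measure D} [μ.IsAddHaarMeasure]
    (f g : 𝓢(D, ℂ)) : Integrable (fun x => f x * g x) μ :=
  (pairing (ContinuousLinearMap.mul ℝ ℂ) f g).integrable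

lemma integral_mul_Dop (c : ℂ) (v : EN n) (f g : 𝓢(EN n, ℂ)) :
    ∫ θ, f θ * Dop c v g θ = -∫ θ, Dop (-c) v f θ * g θ := by
  have hsum : ∀ θ, f θ * Dop c v g θ + Dop (-c) v f θ * g θ =
      f θ * ∂_{v} g θ + ∂_{v} f θ * g θ := by
    intro θ
    simp only [Dop, lineDerivOp_apply_eq_fderiv]
    ring
  rw [eq_neg_iff_add_eq_zero, ← coe_schwartzDop, ← coe_schwartzDop,
    ← integral_add (integrable_mul _ _) (integrable_mul _ _)]
  simp only [coe_schwartzDop, hsum]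
  rw [integral_add (integrable_mul _ _) (integrable_mul _ _),
    integral_mul_lineDerivOp_right_eq_neg_left, neg_add_cancel]

lemma integral_mul_Dop_Dop (c : ℂ) (v w : EN n) (f g : 𝓢(EN n, ℂ)) :
    ∫ θ, f θ * Dop c v (Dop c w g) θ = ∫ θ, Dop (-c) w (Dop (-c) v f) θ * g θ := by
  have hv := integral_mul_Dop c v f (schwartzDop c w g)
  have hw := integral_mul_Dop c w (schwartzDop (-c) v f) g
  simp only [coe_schwartzDop] at hv hw
  rw [hv, hw, neg_neg]

def DopQuad {ι : Type*} [Fintype ι] (c : ℂ) (A : Matrix ι ι ℝ) (v : ι → EN n) (f : EN n → ℂ) :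
    EN n → ℂ :=
  fun θ => ∑ p, ∑ q, (A p q : ℂ) * Dop c (v p) (Dop c (v q) f) θ

variable {ι : Type*} [Fintype ι]

lemma conj_DopQuad (c : ℂ) (A : Matrix ι ι ℝ) (v : ι → EN n) (f : EN n → ℂ) (θ : EN n) :
    starRingEnd ℂ (DopQuad c A v f θ) =
      DopQuad (-starRingEnd ℂ c) A v (fun x => starRingEnd ℂ (f x)) θ := by
  simp only [DopQuad, map_sum, map_mul, conj_ofReal, conj_Dop]

lemma integral_sum_sum_mul {α : Type*} [MeasurableSpace α] {μ : Measure α} (a : ι → ι → ℂ)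
    {F : ι → ι → α → ℂ} (hF : ∀ p q, Integrable (F p q) μ) :
    ∫ x, ∑ p, ∑ q, a p q * F p q x ∂μ = ∑ p, ∑ q, a p q * ∫ x, F p q x ∂μ := by
  rw [integral_finsetSum _ fun p _ => integrable_finsetSum _ fun q _ => (hF p q).const_mul _]
  refine Finset.sum_congr rfl fun p _ => ?_
  rw [integral_finsetSum _ fun q _ => (hF p q).const_mul _]
  simp only [integral_const_mul]

lemma integral_mul_DopQuad (c : ℂ) {A : Matrix ι ι ℝ} (hA : A.IsSymm) (v : ι → EN n)
    (f g : 𝓢(EN n, ℂ)) :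
    ∫ θ, f θ * DopQuad c A v g θ = ∫ θ, DopQuad (-c) A v f θ * g θ := by
  have hf : ∀ p q, Integrable (fun θ => Dop (-c) (v p) (Dop (-c) (v q) f) θ * g θ) := by
    intro p q
    simpa only [coe_schwartzDop] using
      integrable_mul (μ := volume) (schwartzDop (-c) (v p) (schwartzDop (-c) (v q) f)) g
  have hg : ∀ p q, Integrable (fun θ => f θ * Dop c (v p) (Dop c (v q) g) θ) := by
    intro p q
    simpa only [coe_schwartzDop] using
      integrable_mul (μ := volume) f (schwartzDop c (v p) (schwartzDop c (v q) g))
  simp only [DopQuad, Finset.mul_sum, Finset.sum_mul, mul_left_comm (f _), mul_assoc]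
  rw [integral_sum_sum_mul _ hf, integral_sum_sum_mul _ hg, Finset.sum_comm]
  simp only [integral_mul_Dop_Dop, hA.apply]

lemma isSymm_inv_Cmat (b : Fin n → EN n) : (Cmat b)⁻¹.IsSymm :=
  Matrix.IsSymm.inv (Matrix.IsSymm.ext fun p q => real_inner_comm (b p) (b q))

lemma conj_coeff_DeltaG (k : ℕ) (σ : ℂ) :
    starRingEnd ℂ (I * (k : ℂ) / (π : ℂ) * (starRingEnd ℂ σ / (starRingEnd ℂ σ - σ)) ^ 2) =
      -(I * (k : ℂ) / (π : ℂ)) * (σ / (σ - starRingEnd ℂ σ)) ^ 2 := by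
  simp only [map_div₀, map_mul, map_pow, map_sub, conj_I, conj_conj, conj_natCast, conj_ofReal]
  ring

lemma conj_DeltaG (k : ℕ) (σ : ℂ) (b : Fin n → EN n) (f : EN n → ℂ) (θ : EN n) :
    starRingEnd ℂ (DeltaG k σ b f θ) = -(I * (k : ℂ) / (π : ℂ)) * (σ / (σ - starRingEnd ℂ σ)) ^ 2 *
      DopQuad (-σ⁻¹) (Cmat b)⁻¹ b (fun x => starRingEnd ℂ (f x)) θ := by
  change starRingEnd ℂ (_ * DopQuad _ _ _ _ θ) = _
  rw [map_mul, conj_coeff_DeltaG, conj_DopQuad, map_inv₀, conj_conj]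

lemma DeltaGbar_eq_mul_DopQuad (k : ℕ) (σ : ℂ) (b : Fin n → EN n) (f : EN n → ℂ) (θ : EN n) :
    DeltaGbar k σ b f θ = -(I * (k : ℂ) / (π : ℂ)) * (σ / (σ - starRingEnd ℂ σ)) ^ 2 *
      DopQuad σ⁻¹ (Cmat b)⁻¹ b f θ :=
  rfl

theorem DeltaG_DeltaGbar_adjoint_general
    (n : ℕ) (k : ℕ) (b : Module.Basis (Fin n) ℝ (EN n))
    (σ : ℂ) (φ ψ : SchwartzMap (EN n) ℂ) :
    (∫ θ : EN n, DeltaGbar k σ ⇑b ⇑φ θ * (starRingEnd ℂ) (ψ θ)) =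
      (∫ θ : EN n, φ θ * (starRingEnd ℂ) (DeltaG k σ ⇑b ⇑ψ θ)) ∧
    ∀ s : ℝ,
      (∫ θ : EN n, φ θ *
          (starRingEnd ℂ) (1 / (2 * ((k : ℂ) + I * s)) * DeltaG k σ ⇑b ⇑ψ θ)) =
        ∫ θ : EN n,
          (1 / (2 * starRingEnd ℂ ((k : ℂ) + I * s)) * DeltaGbar k σ ⇑b ⇑φ θ) *
            (starRingEnd ℂ) (ψ θ) := by
  have adjoint : ∫ θ, DeltaGbar k σ b φ θ * starRingEnd ℂ (ψ θ) =
      ∫ θ, φ θ * starRingEnd ℂ (DeltaG k σ b ψ θ) := by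
    have hconj : ⇑(ψ.postcompCLM (conjCLE : ℂ →L[ℝ] ℂ)) = fun x => starRingEnd ℂ (ψ x) := rfl
    have h := integral_mul_DopQuad (-σ⁻¹) (isSymm_inv_Cmat b) b φ
      (ψ.postcompCLM (conjCLE : ℂ →L[ℝ] ℂ))
    simp only [hconj, neg_neg] at h
    simp only [DeltaGbar_eq_mul_DopQuad, conj_DeltaG, mul_assoc, mul_left_comm (φ _),
      integral_const_mul]
    rw [h]
  refine ⟨adjoint, fun s => ?_⟩
  simp only [map_mul, map_div₀, map_one, map_ofNat, mul_assoc, mul_left_comm (φ _),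
    integral_const_mul]
  rw [adjoint]

/-- `Δ̂_G` and `Δ̂_Ḡ` are mutually adjoint on Schwartz functions:
`⟨Δ̂_Ḡ φ, ψ⟩ = ⟨φ, Δ̂_G ψ⟩` with `⟨φ,ψ⟩ = ∫_E φ conj ψ`; consequently, for
`t = k + is` with `s ∈ ℝ`, `⟨φ, (1/(2t))Δ̂_G ψ⟩ = ⟨(1/(2t̄))Δ̂_Ḡ φ, ψ⟩`. -/
theorem DeltaG_DeltaGbar_adjoint
    (n : ℕ) (k : ℕ) (hk : 0 < k) (b : Module.Basis (Fin n) ℝ (EN n))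
    (σ : ℂ) (hσ : 0 < σ.im) (φ ψ : SchwartzMap (EN n) ℂ) :
    (∫ θ : EN n, DeltaGbar k σ ⇑b ⇑φ θ * (starRingEnd ℂ) (ψ θ)) =
      (∫ θ : EN n, φ θ * (starRingEnd ℂ) (DeltaG k σ ⇑b ⇑ψ θ)) ∧
    ∀ s : ℝ,
      (∫ θ : EN n, φ θ *
          (starRingEnd ℂ) (1 / (2 * ((k : ℂ) + I * s)) * DeltaG k σ ⇑b ⇑ψ θ)) =
        ∫ θ : EN n,
          (1 / (2 * starRingEnd ℂ ((k : ℂ) + I * s)) * DeltaGbar k σ ⇑b ⇑φ θ) *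
            (starRingEnd ℂ) (ψ θ) :=
  DeltaG_DeltaGbar_adjoint_general n k b σ φ ψ
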